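/- arXiv:1512.02783 — 3 statements merged into one kernel-verified Lean document; each statement's English description precedes it below -/
import Mathlib

section
/- For any α ∈ (n/(n+2), 1) there exists a finite constant C > 0 depending only on n and α such that for every absolutely continuous probability measure μ on ℝⁿ with finite second moment and every R ≥ 0, ∫_{ℝⁿ∖B_R} μ(x)^α dx ≤ (1 + M(μ))^α · C · (1/(R²+1))^{α − (n/2)(1−α)}. -/
/-! Write `f = dμ/dx`, `w = 1 + |x|²` and `β = α / (1 - α)`. Hölder's inequality with exponents
`1/α` and `1/(1-α)`, applied to `f^α = (f w)^α · w^(-α)` on `ℝⁿ ∖ B_R`, bounds the integral by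
`(∫ f w)^α · (∫_{|x| ≥ R} w^(-β))^(1-α)`, and `∫ f w = 1 + M(μ)`. Since `β > n/2`, `w^(-β)` is
integrable. On `|x| ≥ R` we have `w ≥ (1 + R² + |x|²)/2`, and the substitution `x ↦ √(1+R²) x`
gives `∫ (1 + R² + |x|²)^(-β) = (1+R²)^(n/2-β) ∫ w^(-β)`; finally `(n/2 - β)(1-α) = -(α - (n/2)(1-α))`.
-/

open MeasureTheory ENNReal Filter Topology
noncomputable section

abbrev En (n : ℕ) : Type := EuclideanSpace ℝ (Fin n)

def M2 {n : ℕ} (μ : Measure (En n)) : ℝ≥0∞ := ∫⁻ x, (‖x‖₊ : ℝ≥0∞) ^ 2 ∂μ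

open Module

lemma rpow_neg_le_two_rpow_mul {a b β : ℝ} (hb : 0 < b) (hβ : 0 ≤ β)
    (h : b / 2 ≤ a) : a ^ (-β) ≤ 2 ^ β * b ^ (-β) :=
  calc a ^ (-β) ≤ (b / 2) ^ (-β) := Real.rpow_le_rpow_of_nonpos (by positivity) h (by linarith)
    _ = 2 ^ β * b ^ (-β) := by
      rw [Real.div_rpow hb.le zero_le_two, Real.rpow_neg zero_le_two]; field_simp

lemma lt_two_mul_div_one_sub {d α : ℝ} (hd : 0 ≤ d) (h : d / (d + 2) < α) (hα : α < 1) :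
    d < 2 * (α / (1 - α)) := by
  rw [mul_div_assoc', lt_div_iff₀ (sub_pos.2 hα)]
  rw [div_lt_iff₀ (by positivity)] at h
  linarith

lemma ofReal_rpow_sub_div_one_sub_rpow {s d α : ℝ} (hs : 0 < s) (hα : α < 1) :
    ENNReal.ofReal (s ^ (d / 2 - α / (1 - α))) ^ (1 - α) =
      ENNReal.ofReal (1 / s) ^ (α - d / 2 * (1 - α)) := by
  rw [ENNReal.ofReal_rpow_of_pos (by positivity), ENNReal.ofReal_rpow_of_pos (by positivity),
    ← Real.rpow_mul hs.le, one_div, Real.inv_rpow hs.le, ← Real.rpow_neg hs.le]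
  have : 1 - α ≠ 0 := (sub_pos.2 hα).ne'
  congr 2
  field_simp
  ring

lemma lintegral_rpow_le_mul_weight {X : Type*} [MeasurableSpace X] (ν : Measure X) {α : ℝ}
    (hα₀ : 0 < α) (hα₁ : α < 1) {f : X → ℝ≥0∞} (hf : AEMeasurable f ν) {w : X → ℝ}
    (hw : Measurable w) (hw₀ : ∀ x, 0 < w x) :
    ∫⁻ x, f x ^ α ∂ν ≤ (∫⁻ x, f x * ENNReal.ofReal (w x) ∂ν) ^ α *
      (∫⁻ x, ENNReal.ofReal (w x ^ (-(α / (1 - α)))) ∂ν) ^ (1 - α) := by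
  have hα₁' : 0 < 1 - α := sub_pos.2 hα₁
  have hpq : Real.HolderConjugate (1 / α) (1 / (1 - α)) := by
    rw [Real.holderConjugate_iff, one_div, one_div, inv_inv, inv_inv, one_lt_inv_iff₀]
    exact ⟨⟨hα₀, hα₁⟩, by ring⟩
  have hsplit : ∀ x, f x ^ α =
      (f x * ENNReal.ofReal (w x)) ^ α * ENNReal.ofReal (w x ^ (-α)) := fun x => by
    rw [ENNReal.mul_rpow_of_nonneg _ _ hα₀.le, ← ENNReal.ofReal_rpow_of_pos (hw₀ x), mul_assoc,
      ← ENNReal.rpow_add _ _ (by simpa using hw₀ x) ENNReal.ofReal_ne_top]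
    simp
  have hfirst : ∀ x, ((f x * ENNReal.ofReal (w x)) ^ α) ^ (1 / α) = f x * ENNReal.ofReal (w x) :=
    fun x => by rw [← ENNReal.rpow_mul, mul_one_div_cancel hα₀.ne', ENNReal.rpow_one]
  have hsecond : ∀ x, ENNReal.ofReal (w x ^ (-α)) ^ (1 / (1 - α)) =
      ENNReal.ofReal (w x ^ (-(α / (1 - α)))) := fun x => by
    rw [ENNReal.ofReal_rpow_of_pos (by have := hw₀ x; positivity),
      ← Real.rpow_mul (hw₀ x).le, neg_mul, mul_one_div]
  calc ∫⁻ x, f x ^ α ∂ν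
      = ∫⁻ x, (f x * ENNReal.ofReal (w x)) ^ α * ENNReal.ofReal (w x ^ (-α)) ∂ν := by
        simp_rw [hsplit]
    _ ≤ (∫⁻ x, ((f x * ENNReal.ofReal (w x)) ^ α) ^ (1 / α) ∂ν) ^ (1 / (1 / α)) *
          (∫⁻ x, ENNReal.ofReal (w x ^ (-α)) ^ (1 / (1 - α)) ∂ν) ^ (1 / (1 / (1 - α))) :=
        ENNReal.lintegral_mul_le_Lp_mul_Lq ν hpq
          ((hf.mul hw.ennreal_ofReal.aemeasurable).pow_const α)
          (hw.pow_const _).ennreal_ofReal.aemeasurable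
    _ = _ := by simp_rw [hfirst, hsecond, one_div_one_div]

section HaarWeight

variable {E : Type*} [NormedAddCommGroup E] [NormedSpace ℝ E] [FiniteDimensional ℝ E]
  [MeasurableSpace E] [BorelSpace E] (μ : Measure E) [μ.IsAddHaarMeasure]

lemma lintegral_comp_smul (f : E → ℝ≥0∞) {r : ℝ} (hr : r ≠ 0) :
    ∫⁻ x, f (r • x) ∂μ = ENNReal.ofReal |(r ^ finrank ℝ E)⁻¹| * ∫⁻ x, f x ∂μ := by
  have h := lintegral_map_equiv f (Homeomorph.smulOfNeZero r hr).toMeasurableEquiv (μ := μ)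
  rw [show ⇑(Homeomorph.smulOfNeZero r hr).toMeasurableEquiv = (r • ·) from rfl,
    Measure.map_addHaar_smul μ hr, lintegral_smul_measure] at h
  exact h.symm

lemma lintegral_add_sq_norm_rpow_neg {s : ℝ} (hs : 0 < s) (β : ℝ) :
    ∫⁻ x, ENNReal.ofReal ((s + ‖x‖ ^ 2) ^ (-β)) ∂μ =
      ENNReal.ofReal (s ^ ((finrank ℝ E : ℝ) / 2 - β)) *
        ∫⁻ x, ENNReal.ofReal ((1 + ‖x‖ ^ 2) ^ (-β)) ∂μ := by
  have hc : 0 < √s := Real.sqrt_pos.2 hs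
  have hcd : √s ^ finrank ℝ E = s ^ ((finrank ℝ E : ℝ) / 2) := by
    rw [Real.sqrt_eq_rpow, ← Real.rpow_natCast, ← Real.rpow_mul hs.le]
    ring_nf
  have hscale : ∀ x : E, ENNReal.ofReal ((s + ‖√s • x‖ ^ 2) ^ (-β)) =
      ENNReal.ofReal (s ^ (-β)) * ENNReal.ofReal ((1 + ‖x‖ ^ 2) ^ (-β)) := fun x => by
    rw [norm_smul, Real.norm_of_nonneg hc.le, mul_pow, Real.sq_sqrt hs.le,
      ← ENNReal.ofReal_mul (by positivity), ← Real.mul_rpow hs.le (by positivity), mul_one_add]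
  calc ∫⁻ x, ENNReal.ofReal ((s + ‖x‖ ^ 2) ^ (-β)) ∂μ
      = ENNReal.ofReal (s ^ ((finrank ℝ E : ℝ) / 2)) *
          ∫⁻ x, ENNReal.ofReal ((s + ‖√s • x‖ ^ 2) ^ (-β)) ∂μ := by
        rw [lintegral_comp_smul μ (fun x => ENNReal.ofReal ((s + ‖x‖ ^ 2) ^ (-β))) hc.ne',
          ← mul_assoc, ← ENNReal.ofReal_mul (by positivity),
          hcd, abs_of_pos (by positivity), mul_inv_cancel₀ (by positivity), ENNReal.ofReal_one,
          one_mul]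
    _ = ENNReal.ofReal (s ^ ((finrank ℝ E : ℝ) / 2)) * (ENNReal.ofReal (s ^ (-β)) *
          ∫⁻ x, ENNReal.ofReal ((1 + ‖x‖ ^ 2) ^ (-β)) ∂μ) := by
        simp_rw [hscale]
        rw [lintegral_const_mul' _ _ ENNReal.ofReal_ne_top]
    _ = _ := by
        rw [← mul_assoc, ← ENNReal.ofReal_mul (by positivity), ← Real.rpow_add hs, sub_eq_add_neg]

lemma lintegral_one_add_sq_norm_rpow_neg_lt_top {β : ℝ} (hβ : (finrank ℝ E : ℝ) < 2 * β) :
    ∫⁻ x, ENNReal.ofReal ((1 + ‖x‖ ^ 2) ^ (-β)) ∂μ < ∞ := by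
  have := (integrable_rpow_neg_one_add_norm_sq (μ := μ) hβ).lintegral_lt_top
  rwa [neg_div, mul_div_cancel_left₀ _ two_ne_zero] at this

lemma setLIntegral_compl_ball_one_add_sq_norm_rpow_neg_le {β : ℝ} (hβ : 0 ≤ β) {R : ℝ}
    (hR : 0 ≤ R) :
    ∫⁻ x in (Metric.ball (0 : E) R)ᶜ, ENNReal.ofReal ((1 + ‖x‖ ^ 2) ^ (-β)) ∂μ ≤
      ENNReal.ofReal (2 ^ β) * ENNReal.ofReal ((1 + R ^ 2) ^ ((finrank ℝ E : ℝ) / 2 - β)) *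
        ∫⁻ x, ENNReal.ofReal ((1 + ‖x‖ ^ 2) ^ (-β)) ∂μ := by
  have hpt : ∀ x ∈ (Metric.ball (0 : E) R)ᶜ, ENNReal.ofReal ((1 + ‖x‖ ^ 2) ^ (-β)) ≤
      ENNReal.ofReal (2 ^ β) * ENNReal.ofReal ((1 + R ^ 2 + ‖x‖ ^ 2) ^ (-β)) := by
    intro x hx
    have hxR : R ≤ ‖x‖ := by simpa using hx
    rw [← ENNReal.ofReal_mul (by positivity)]
    exact ENNReal.ofReal_le_ofReal (rpow_neg_le_two_rpow_mul (by positivity) hβ (by nlinarith))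
  calc _ ≤ ∫⁻ x in (Metric.ball (0 : E) R)ᶜ,
          ENNReal.ofReal (2 ^ β) * ENNReal.ofReal ((1 + R ^ 2 + ‖x‖ ^ 2) ^ (-β)) ∂μ :=
        setLIntegral_mono' Metric.isOpen_ball.measurableSet.compl hpt
    _ ≤ ∫⁻ x, ENNReal.ofReal (2 ^ β) * ENNReal.ofReal ((1 + R ^ 2 + ‖x‖ ^ 2) ^ (-β)) ∂μ :=
        setLIntegral_le_lintegral _ _
    _ = _ := by
        rw [lintegral_const_mul' _ _ ENNReal.ofReal_ne_top,
          lintegral_add_sq_norm_rpow_neg μ (by positivity), mul_assoc]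

end HaarWeight

lemma lintegral_one_add_sq_norm_rpow_neg_pos {F : Type*} [NormedAddCommGroup F]
    [MeasurableSpace F] [OpensMeasurableSpace F] (ν : Measure F) [NeZero ν] (β : ℝ) :
    0 < ∫⁻ x, ENNReal.ofReal ((1 + ‖x‖ ^ 2) ^ (-β)) ∂ν := by
  rw [lintegral_pos_iff_support (by fun_prop)]
  have : Function.support (fun x : F => ENNReal.ofReal ((1 + ‖x‖ ^ 2) ^ (-β))) = Set.univ :=
    Function.support_eq_univ fun x => (ENNReal.ofReal_pos.2 (by positivity)).ne'
  rw [this]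
  exact Measure.measure_univ_pos.2 (NeZero.ne ν)

lemma lintegral_rnDeriv_mul_one_add_sq_norm {n : ℕ} (μ : Measure (En n)) [IsProbabilityMeasure μ]
    (hμ : μ ≪ volume) :
    ∫⁻ x, μ.rnDeriv volume x * ENNReal.ofReal (1 + ‖x‖ ^ 2) = 1 + M2 μ := by
  have hpt : ∀ x : En n, ENNReal.ofReal (1 + ‖x‖ ^ 2) = 1 + (‖x‖₊ : ℝ≥0∞) ^ 2 := fun x => by
    rw [ENNReal.ofReal_add zero_le_one (by positivity), ENNReal.ofReal_one,
      ENNReal.ofReal_pow (norm_nonneg x), ofReal_norm, enorm_eq_nnnorm]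
  rw [lintegral_rnDeriv_mul hμ (by fun_prop)]
  simp_rw [hpt]
  rw [lintegral_add_left measurable_const, lintegral_one, measure_univ, M2]

/-- for `α ∈ (n/(n+2), 1)` there is a finite `C > 0` (depending only on `n, α`)
such that for every absolutely continuous probability measure `μ` on `ℝⁿ` with finite
second moment and every `R ≥ 0`,
`∫_{ℝⁿ∖B_R} μ(x)^α dx ≤ (1 + M(μ))^α ⬝ C ⬝ (1/(R²+1))^{α − (n/2)(1−α)}`. -/
theorem stmt_2 {n : ℕ} (α : ℝ) (hα₁ : (n : ℝ) / (n + 2) < α) (hα₂ : α < 1) :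
    ∃ C : ℝ≥0∞, 0 < C ∧ C ≠ ∞ ∧
      ∀ (μ : Measure (En n)) [IsProbabilityMeasure μ], μ ≪ volume → M2 μ ≠ ∞ →
        ∀ R : ℝ, 0 ≤ R →
          ∫⁻ x in (Metric.ball (0 : En n) R)ᶜ, (μ.rnDeriv volume x) ^ α ∂volume ≤
            (1 + M2 μ) ^ α * C *
              (ENNReal.ofReal (1 / (R ^ 2 + 1))) ^ (α - (n / 2 : ℝ) * (1 - α)) := by
  have hα₀ : 0 < α := lt_of_le_of_lt (by positivity) hα₁
  set β := α / (1 - α)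
  have hnβ : (finrank ℝ (En n) : ℝ) < 2 * β := by
    rw [finrank_euclideanSpace_fin]
    exact lt_two_mul_div_one_sub n.cast_nonneg hα₁ hα₂
  set I := ∫⁻ x : En n, ENNReal.ofReal ((1 + ‖x‖ ^ 2) ^ (-β))
  have hI : I < ∞ := lintegral_one_add_sq_norm_rpow_neg_lt_top volume hnβ
  refine ⟨(ENNReal.ofReal (2 ^ β) * I) ^ (1 - α), ?_, ?_, fun μ _ hμ _ R hR => ?_⟩
  · exact ENNReal.rpow_pos (ENNReal.mul_pos (by simp; positivity)
      (lintegral_one_add_sq_norm_rpow_neg_pos volume β).ne') (by finiteness)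
  · exact ENNReal.rpow_ne_top_of_nonneg (sub_pos.2 hα₂).le (by finiteness)
  calc ∫⁻ x in (Metric.ball (0 : En n) R)ᶜ, (μ.rnDeriv volume x) ^ α
      ≤ (∫⁻ x in (Metric.ball (0 : En n) R)ᶜ,
            μ.rnDeriv volume x * ENNReal.ofReal (1 + ‖x‖ ^ 2)) ^ α *
          (∫⁻ x in (Metric.ball (0 : En n) R)ᶜ,
            ENNReal.ofReal ((1 + ‖x‖ ^ 2) ^ (-β))) ^ (1 - α) :=
        lintegral_rpow_le_mul_weight _ hα₀ hα₂ (μ.measurable_rnDeriv _).aemeasurable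
          (by fun_prop) fun x => by positivity
    _ ≤ (1 + M2 μ) ^ α *
          (ENNReal.ofReal (2 ^ β) * ENNReal.ofReal ((1 + R ^ 2) ^ ((n : ℝ) / 2 - β)) * I) ^
            (1 - α) := by
        gcongr
        · exact (setLIntegral_le_lintegral _ _).trans_eq
            (lintegral_rnDeriv_mul_one_add_sq_norm μ hμ)
        · simpa using setLIntegral_compl_ball_one_add_sq_norm_rpow_neg_le (E := En n) volume
            (by positivity) hR
    _ = _ := by
        rw [mul_right_comm, ENNReal.mul_rpow_of_nonneg _ _ (sub_pos.2 hα₂).le,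
          ofReal_rpow_sub_div_one_sub_rpow (by positivity) hα₂, add_comm (1 : ℝ), mul_assoc]
end
end

section
/- Let γ ∈ Π(μ,ν) be a coupling of probability measures μ, ν on ℝⁿ, and let γ_ℓ be its block approximation at scale ℓ > 0, i.e., γ_ℓ = Σ_{(j,k)∈(ℤⁿ)²} γ(Q_j^ℓ × Q_k^ℓ) (μ_j^ℓ ⊗ ν_k^ℓ). Then γ_ℓ is also a coupling of μ and ν: γ_ℓ ∈ Π(μ,ν). -/
open MeasureTheory ENNReal Filter Topology
noncomputable section

def IsCoupling {n : ℕ} (μ ν : Measure (En n)) (γ : Measure (En n × En n)) : Prop :=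
  γ.map Prod.fst = μ ∧ γ.map Prod.snd = ν

def tCost {n : ℕ} (γ : Measure (En n × En n)) : ℝ≥0∞ :=
  ∫⁻ p, (‖p.1 - p.2‖₊ : ℝ≥0∞) ^ 2 ∂γ

def W2sq {n : ℕ} (μ ν : Measure (En n)) : ℝ≥0∞ :=
  ⨅ (γ : Measure (En n × En n)) (_ : IsCoupling μ ν γ), tCost γ

def dens {X : Type*} [MeasureSpace X] (μ : Measure X) (x : X) : ℝ :=
  (μ.rnDeriv volume x).toReal

def entIntegrand {X : Type*} [MeasureSpace X] (μ : Measure X) (x : X) : ℝ :=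
  dens μ x * Real.log (dens μ x)

def Hneg {X : Type*} [MeasureSpace X] (μ : Measure X) : ℝ≥0∞ :=
  ∫⁻ x, ENNReal.ofReal (-(entIntegrand μ x))

def Hpos {X : Type*} [MeasureSpace X] (μ : Measure X) : ℝ≥0∞ :=
  ∫⁻ x, ENNReal.ofReal (entIntegrand μ x)

open scoped Classical in
def entE {X : Type*} [MeasureSpace X] (μ : Measure X) : EReal :=
  if μ ≪ (volume : Measure X) then
    (if Hpos μ = ∞ then (⊤ : EReal) else ((Hpos μ).toReal : EReal) - ((Hneg μ : ℝ≥0∞) : EReal))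
  else ⊤

def W2epsE {n : ℕ} (ε : ℝ) (μ ν : Measure (En n)) : EReal :=
  ⨅ (γ : Measure (En n × En n)) (_ : IsCoupling μ ν γ),
    ((tCost γ : ℝ≥0∞) : EReal) + (ε : EReal) * entE γ

def cube {n : ℕ} (j : Fin n → ℤ) (ℓ : ℝ) : Set (En n) :=
  {x | ∀ i, (j i : ℝ) * ℓ ≤ x i ∧ x i < ((j i : ℝ) + 1) * ℓ}

def cellNormalize {n : ℕ} (μ : Measure (En n)) (S : Set (En n)) : Measure (En n) :=
  (μ S)⁻¹ • μ.restrict S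

def blockApprox {n : ℕ} (μ ν : Measure (En n)) (γ : Measure (En n × En n)) (ℓ : ℝ) :
    Measure (En n × En n) :=
  Measure.sum (fun jk : (Fin n → ℤ) × (Fin n → ℤ) =>
    γ (cube jk.1 ℓ ×ˢ cube jk.2 ℓ) •
      ((cellNormalize μ (cube jk.1 ℓ)).prod (cellNormalize ν (cube jk.2 ℓ))))

/-! The second marginal of a block approximation is the first marginal of the block approximation
of the swapped coupling, so only first marginals need to be computed. Integrating out the second
variable, the cell `(j, k)` contributes `γ(Q_j × Q_k) μ_j(s)` (a cell with `ν(Q_k) = 0` carries no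
`γ`-mass). Summing over `k` gives `μ(Q_j) μ_j(s) = μ(s ∩ Q_j)`, since `γ` has first marginal `μ`,
and summing over `j` gives `μ(s)`. -/

open Set Function

namespace MeasureTheory

variable {α β ι κ : Type*} [MeasurableSpace α] [MeasurableSpace β]

structure IsMeasurablePartition (A : ι → Set α) : Prop where
  measurableSet : ∀ j, MeasurableSet (A j)
  pairwise_disjoint : Pairwise (Disjoint on A)
  iUnion_eq_univ : ⋃ j, A j = univ

namespace IsMeasurablePartition

variable {A : ι → Set α}

lemma fibers [MeasurableSpace ι] [MeasurableSingletonClass ι] {f : α → ι} (hf : Measurable f) :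
    IsMeasurablePartition fun j => f ⁻¹' {j} where
  measurableSet j := hf (measurableSet_singleton j)
  pairwise_disjoint := pairwise_disjoint_fiber f
  iUnion_eq_univ := eq_univ_of_forall fun x => mem_iUnion.2 ⟨f x, rfl⟩

lemma preimage (hA : IsMeasurablePartition A) {f : β → α} (hf : Measurable f) :
    IsMeasurablePartition fun j => f ⁻¹' A j where
  measurableSet j := hf (hA.measurableSet j)
  pairwise_disjoint _ _ hij := (hA.pairwise_disjoint hij).preimage f
  iUnion_eq_univ := by rw [← preimage_iUnion, hA.iUnion_eq_univ, preimage_univ]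

lemma tsum_measure_inter [Countable ι] (hA : IsMeasurablePartition A) (μ : Measure α)
    {s : Set α} (hs : MeasurableSet s) : ∑' j, μ (s ∩ A j) = μ s := by
  rw [← measure_iUnion (fun _ _ hij => (hA.pairwise_disjoint hij).mono inter_subset_right
      inter_subset_right) (fun j => hs.inter (hA.measurableSet j)), ← inter_iUnion,
    hA.iUnion_eq_univ, inter_univ]

end IsMeasurablePartition

lemma measure_mul_inv_smul_restrict_apply {μ : Measure α} {s t : Set α} (hs : MeasurableSet s)
    (ht : μ t ≠ ∞) : μ t * ((μ t)⁻¹ • μ.restrict t) s = μ (s ∩ t) := by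
  rw [Measure.smul_apply, smul_eq_mul, Measure.restrict_apply hs, ← mul_assoc]
  by_cases h0 : μ t = 0
  · rw [h0, zero_mul, zero_mul, measure_mono_null inter_subset_right h0]
  · rw [ENNReal.mul_inv_cancel h0 ht, one_mul]

lemma mul_inv_smul_restrict_univ_of_le {μ : Measure α} {t : Set α} {c : ℝ≥0∞} (hc : c ≤ μ t)
    (ht : μ t ≠ ∞) : c * ((μ t)⁻¹ • μ.restrict t) univ = c := by
  rw [Measure.smul_apply, smul_eq_mul, Measure.restrict_apply_univ]
  by_cases h0 : μ t = 0
  · rw [nonpos_iff_eq_zero.1 (hc.trans_eq h0), zero_mul]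
  · rw [ENNReal.inv_mul_cancel h0 ht, mul_one]

def blockMeasure (μ : Measure α) (ν : Measure β) (γ : Measure (α × β)) (A : ι → Set α)
    (B : κ → Set β) : Measure (α × β) :=
  Measure.sum fun jk : ι × κ => γ (A jk.1 ×ˢ B jk.2) •
    (((μ (A jk.1))⁻¹ • μ.restrict (A jk.1)).prod ((ν (B jk.2))⁻¹ • ν.restrict (B jk.2)))

variable {μ : Measure α} {ν : Measure β} {γ : Measure (α × β)} {A : ι → Set α} {B : κ → Set β}

lemma map_swap_blockMeasure [SFinite μ] [SFinite ν] (hA : IsMeasurablePartition A)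
    (hB : IsMeasurablePartition B) :
    (blockMeasure μ ν γ A B).map Prod.swap = blockMeasure ν μ (γ.map Prod.swap) B A := by
  rw [blockMeasure, Measure.map_sum measurable_swap.aemeasurable, blockMeasure,
    ← Measure.sum_comp_equiv (Equiv.prodComm ι κ)]
  congr 1
  funext ⟨j, k⟩
  simp only [comp_apply, Equiv.prodComm_apply, Prod.swap_prod_mk, Measure.map_smul,
    Measure.prod_swap, Measure.map_apply measurable_swap
      ((hB.measurableSet k).prod (hA.measurableSet j)), preimage_swap_prod]

variable [Countable ι] [Countable κ]

lemma map_fst_blockMeasure [IsFiniteMeasure μ] [IsFiniteMeasure ν]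
    (hμ : γ.map Prod.fst = μ) (hν : γ.map Prod.snd = ν)
    (hA : IsMeasurablePartition A) (hB : IsMeasurablePartition B) :
    (blockMeasure μ ν γ A B).map Prod.fst = μ := by
  have hγA : ∀ j, γ (Prod.fst ⁻¹' A j) = μ (A j) := fun j => by
    rw [← Measure.map_apply measurable_fst (hA.measurableSet j), hμ]
  have hγB : ∀ j k, γ (A j ×ˢ B k) ≤ ν (B k) := fun j k => by
    rw [← hν, Measure.map_apply measurable_snd (hB.measurableSet k)]
    exact measure_mono fun p hp => hp.2
  have hrow : ∀ j, ∑' k, γ (A j ×ˢ B k) = μ (A j) := fun j => by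
    simp_rw [Set.prod_eq, ← hγA j]
    exact (hB.preimage measurable_snd).tsum_measure_inter γ (measurable_fst (hA.measurableSet j))
  ext s hs
  calc (blockMeasure μ ν γ A B).map Prod.fst s
      = ∑' jk : ι × κ, γ (A jk.1 ×ˢ B jk.2) * ((μ (A jk.1))⁻¹ • μ.restrict (A jk.1)) s := by
        rw [Measure.map_apply measurable_fst hs, blockMeasure,
          Measure.sum_apply _ (measurable_fst hs), ← prod_univ]
        refine tsum_congr fun jk => ?_
        rw [Measure.smul_apply, smul_eq_mul, Measure.prod_prod, ← mul_assoc, mul_right_comm,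
          mul_inv_smul_restrict_univ_of_le (hγB _ _) (measure_ne_top ν _)]
    _ = ∑' j, μ (A j) * ((μ (A j))⁻¹ • μ.restrict (A j)) s := by
        simp_rw [ENNReal.tsum_prod', ENNReal.tsum_mul_right, hrow]
    _ = μ s := by
        simp_rw [measure_mul_inv_smul_restrict_apply hs (measure_ne_top μ _)]
        exact hA.tsum_measure_inter μ hs

lemma map_snd_blockMeasure [IsFiniteMeasure μ] [IsFiniteMeasure ν]
    (hμ : γ.map Prod.fst = μ) (hν : γ.map Prod.snd = ν)
    (hA : IsMeasurablePartition A) (hB : IsMeasurablePartition B) :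
    (blockMeasure μ ν γ A B).map Prod.snd = ν := by
  have hswap_fst : (γ.map Prod.swap).map Prod.fst = ν := by
    rwa [Measure.map_map measurable_fst measurable_swap]
  have hswap_snd : (γ.map Prod.swap).map Prod.snd = μ := by
    rwa [Measure.map_map measurable_snd measurable_swap]
  calc (blockMeasure μ ν γ A B).map Prod.snd
      = ((blockMeasure μ ν γ A B).map Prod.swap).map Prod.fst :=
        (Measure.map_map measurable_fst measurable_swap).symm
    _ = ν := by rw [map_swap_blockMeasure hA hB, map_fst_blockMeasure hswap_fst hswap_snd hB hA]

end MeasureTheory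

open MeasureTheory

lemma cube_eq_preimage_floor {n : ℕ} {ℓ : ℝ} (hℓ : 0 < ℓ) (j : Fin n → ℤ) :
    cube j ℓ = (fun x : En n => fun i => ⌊x i / ℓ⌋) ⁻¹' {j} := by
  ext x
  simp only [cube, mem_ofPred_eq, mem_preimage, mem_singleton_iff, funext_iff, Int.floor_eq_iff,
    le_div_iff₀ hℓ, div_lt_iff₀ hℓ]

lemma isMeasurablePartition_cube {n : ℕ} {ℓ : ℝ} (hℓ : 0 < ℓ) :
    IsMeasurablePartition fun j : Fin n → ℤ => cube j ℓ := by
  simp only [cube_eq_preimage_floor hℓ]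
  exact .fibers <| measurable_pi_lambda _ fun i =>
    Int.measurable_floor.comp ((EuclideanSpace.proj i).continuous.measurable.div_const ℓ)

lemma blockApprox_eq_blockMeasure {n : ℕ} (μ ν : Measure (En n)) (γ : Measure (En n × En n))
    (ℓ : ℝ) : blockApprox μ ν γ ℓ = blockMeasure μ ν γ (cube · ℓ) (cube · ℓ) :=
  rfl

/-- the block approximation at scale `ℓ > 0` of a coupling `γ ∈ Π(μ,ν)` of
probability measures `μ, ν` on `ℝⁿ` is again a coupling of `μ` and `ν`. -/
theorem stmt_7 {n : ℕ} (μ ν : Measure (En n))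
    [IsProbabilityMeasure μ] [IsProbabilityMeasure ν]
    (γ : Measure (En n × En n)) (hγ : IsCoupling μ ν γ)
    (ℓ : ℝ) (hℓ : 0 < ℓ) :
    IsCoupling μ ν (blockApprox μ ν γ ℓ) := by
  obtain ⟨hμ, hν⟩ := hγ
  have hQ : IsMeasurablePartition fun j : Fin n → ℤ => cube j ℓ := isMeasurablePartition_cube hℓ
  rw [blockApprox_eq_blockMeasure]
  exact ⟨map_fst_blockMeasure hμ hν hQ hQ, map_snd_blockMeasure hμ hν hQ hQ⟩
end
end

section
/- Let μ, ν be absolutely continuous probability measures on ℝⁿ with finite second moments and finite entropy, and let ε_k → 0⁺. Define F_k(γ) = ∫|x−y|²dγ + ε_k H₂(γ) for γ ∈ Π(μ,ν) and +∞ otherwise, and F(γ) = ∫|x−y|²dγ for γ ∈ Π(μ,ν) and +∞ otherwise. Then for any γ and any sequence γ_k → γ narrowly, F(γ) ≤ liminf_{k→∞} F_k(γ_k). -/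
/-!
Weak limits of couplings are couplings, because pushing a probability measure forward along a
coordinate projection is narrowly continuous; so off `Π(μ,ν)` the functionals `F_k(γ_k)` are
eventually `+∞`. On `Π(μ,ν)`, the Fenchel inequality `-t log t ≤ t q + exp (-q - 1)` with
`q(x,y) = |x|² + |y|²` bounds the negative part of the entropy of every coupling by
`M(μ) + M(ν)` plus a Gaussian integral, so `F_k(γ_k) ≥ ∫|x-y|² dγ_k - ε_k b` for a constant `b`.
The cost is narrowly lower semicontinuous by the portmanteau theorem, and `ε_k b → 0`.
-/
open MeasureTheory ENNReal Filter Topology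
noncomputable section

open scoped Classical in
/-- The entropy-regularized transport functional `F_ε` on `𝒫(ℝⁿ×ℝⁿ)` (`+∞` off `Π(μ,ν)`). -/
def gammaFk {n : ℕ} (μ ν : Measure (En n)) (ε : ℝ) (γ : Measure (En n × En n)) : EReal :=
  if IsCoupling μ ν γ then ((tCost γ : ℝ≥0∞) : EReal) + (ε : EReal) * entE γ else ⊤

open scoped Classical in
/-- The unregularized transport functional `F` on `𝒫(ℝⁿ×ℝⁿ)` (`+∞` off `Π(μ,ν)`). -/
def gammaF {n : ℕ} (μ ν : Measure (En n)) (γ : Measure (En n × En n)) : EReal :=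
  if IsCoupling μ ν γ then ((tCost γ : ℝ≥0∞) : EReal) else ⊤

theorem neg_mul_log_le_mul_add_exp {t : ℝ} (ht : 0 ≤ t) (q : ℝ) :
    -(t * Real.log t) ≤ t * q + Real.exp (-q - 1) := by
  rcases ht.eq_or_lt with rfl | ht
  · simpa using (Real.exp_pos _).le
  · have h := Real.add_one_le_exp (-q - 1 - Real.log t)
    rw [Real.exp_sub, Real.exp_log ht, le_div_iff₀ ht] at h
    linarith

theorem Hneg_le_lintegral_add_lintegral_exp {X : Type*} [MeasureSpace X] (ρ : Measure X)
    {q : X → ℝ} (hq : Measurable q) :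
    Hneg ρ ≤ ∫⁻ x, ENNReal.ofReal (q x) ∂ρ + ∫⁻ x, ENNReal.ofReal (Real.exp (-q x - 1)) := by
  have hpointwise : ∀ x, ENNReal.ofReal (-(entIntegrand ρ x)) ≤
      ρ.rnDeriv volume x * ENNReal.ofReal (q x) + ENNReal.ofReal (Real.exp (-q x - 1)) := by
    intro x
    have ht : 0 ≤ dens ρ x := ENNReal.toReal_nonneg
    calc ENNReal.ofReal (-(entIntegrand ρ x))
        ≤ ENNReal.ofReal (dens ρ x * q x + Real.exp (-q x - 1)) :=
          ENNReal.ofReal_le_ofReal (neg_mul_log_le_mul_add_exp ht _)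
      _ ≤ ENNReal.ofReal (dens ρ x) * ENNReal.ofReal (q x)
            + ENNReal.ofReal (Real.exp (-q x - 1)) := by
          rw [← ENNReal.ofReal_mul ht]
          exact ENNReal.ofReal_add_le
      _ ≤ _ := by
          gcongr
          exact ENNReal.ofReal_toReal_le
  have hdensity : ∫⁻ x, ρ.rnDeriv volume x * ENNReal.ofReal (q x) ≤
      ∫⁻ x, ENNReal.ofReal (q x) ∂ρ := by
    calc ∫⁻ x, ρ.rnDeriv volume x * ENNReal.ofReal (q x)
        = ∫⁻ x, ENNReal.ofReal (q x) ∂(volume.withDensity (ρ.rnDeriv volume)) :=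
          (lintegral_withDensity_eq_lintegral_mul _ (Measure.measurable_rnDeriv _ _)
            hq.ennreal_ofReal).symm
      _ ≤ _ := lintegral_mono' (Measure.withDensity_rnDeriv_le _ _) le_rfl
  calc Hneg ρ
      ≤ ∫⁻ x, (ρ.rnDeriv volume x * ENNReal.ofReal (q x)
          + ENNReal.ofReal (Real.exp (-q x - 1))) := lintegral_mono hpointwise
    _ = (∫⁻ x, ρ.rnDeriv volume x * ENNReal.ofReal (q x))
          + ∫⁻ x, ENNReal.ofReal (Real.exp (-q x - 1)) :=
        lintegral_add_right _ (by fun_prop)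
    _ ≤ _ := by gcongr

theorem neg_Hneg_le_entE {X : Type*} [MeasureSpace X] (ρ : Measure X) :
    -(Hneg ρ : EReal) ≤ entE ρ := by
  unfold entE
  split_ifs
  · exact le_top
  · rw [sub_eq_add_neg]
    exact le_add_of_nonneg_left (EReal.coe_nonneg.2 ENNReal.toReal_nonneg)
  · exact le_top

theorem integrable_exp_neg_norm_sq {V : Type*} [NormedAddCommGroup V] [InnerProductSpace ℝ V]
    [FiniteDimensional ℝ V] [MeasurableSpace V] [BorelSpace V] :
    Integrable (fun x : V => Real.exp (-‖x‖ ^ 2)) := by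
  convert (GaussianFourier.integrable_cexp_neg_mul_sq_norm_add
    (b := 1) (V := V) (by norm_num) 0 0).norm using 2 with v
  rw [Complex.norm_exp]
  norm_num [← Complex.ofReal_pow]

theorem ofReal_norm_sq {E : Type*} [SeminormedAddCommGroup E] (x : E) :
    ENNReal.ofReal (‖x‖ ^ 2) = (‖x‖₊ : ℝ≥0∞) ^ 2 := by
  rw [ENNReal.ofReal_pow (norm_nonneg _), ofReal_norm, enorm_eq_nnnorm]

theorem lintegral_ofReal_exp_neg_norm_sq_ne_top {V W : Type*}
    [NormedAddCommGroup V] [InnerProductSpace ℝ V] [FiniteDimensional ℝ V]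
    [MeasurableSpace V] [BorelSpace V]
    [NormedAddCommGroup W] [InnerProductSpace ℝ W] [FiniteDimensional ℝ W]
    [MeasurableSpace W] [BorelSpace W] :
    ∫⁻ z : V × W, ENNReal.ofReal (Real.exp (-(‖z.1‖ ^ 2 + ‖z.2‖ ^ 2) - 1)) ≠ ∞ := by
  have hint : Integrable (fun z : V × W =>
      Real.exp (-1) * (Real.exp (-‖z.1‖ ^ 2) * Real.exp (-‖z.2‖ ^ 2))) := by
    rw [Measure.volume_eq_prod]
    exact (integrable_exp_neg_norm_sq.mul_prod integrable_exp_neg_norm_sq).const_mul _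
  convert hint.lintegral_lt_top.ne using 4 with z
  rw [← Real.exp_add, ← Real.exp_add]
  ring_nf

theorem lintegral_norm_sq_add_norm_sq_of_isCoupling {n : ℕ} {μ ν : Measure (En n)}
    {γ : Measure (En n × En n)} (hγ : IsCoupling μ ν γ) :
    ∫⁻ z, ENNReal.ofReal (‖z.1‖ ^ 2 + ‖z.2‖ ^ 2) ∂γ = M2 μ + M2 ν := by
  simp_rw [ENNReal.ofReal_add (sq_nonneg _) (sq_nonneg _), ofReal_norm_sq]
  rw [lintegral_add_left (by fun_prop), M2, M2, ← hγ.1, ← hγ.2,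
    lintegral_map (by fun_prop) measurable_fst, lintegral_map (by fun_prop) measurable_snd]

theorem exists_Hneg_le_of_isCoupling {n : ℕ} {μ ν : Measure (En n)}
    (hμ : M2 μ ≠ ∞) (hν : M2 ν ≠ ∞) :
    ∃ b : ℝ, ∀ γ, IsCoupling μ ν γ → (Hneg γ : EReal) ≤ b := by
  set C := ∫⁻ z : En n × En n, ENNReal.ofReal (Real.exp (-(‖z.1‖ ^ 2 + ‖z.2‖ ^ 2) - 1))
  have hB : M2 μ + M2 ν + C ≠ ∞ :=
    ENNReal.add_ne_top.2 ⟨ENNReal.add_ne_top.2 ⟨hμ, hν⟩, lintegral_ofReal_exp_neg_norm_sq_ne_top⟩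
  refine ⟨(M2 μ + M2 ν + C).toReal, fun γ hγ => ?_⟩
  have h := Hneg_le_lintegral_add_lintegral_exp γ
    (q := fun z : En n × En n => ‖z.1‖ ^ 2 + ‖z.2‖ ^ 2) (by fun_prop)
  rw [lintegral_norm_sq_add_norm_sq_of_isCoupling hγ] at h
  rw [EReal.coe_ennreal_toReal hB]
  exact EReal.coe_ennreal_le_coe_ennreal_iff.2 h

theorem coe_tCost_sub_le_gammaFk {n : ℕ} {μ ν : Measure (En n)} {ε b : ℝ} (hε : 0 ≤ ε)
    (hb : ∀ γ, IsCoupling μ ν γ → (Hneg γ : EReal) ≤ b) (γ : Measure (En n × En n)) :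
    (tCost γ : EReal) + ((-(ε * b) : ℝ) : EReal) ≤ gammaFk μ ν ε γ := by
  unfold gammaFk
  split_ifs with hγ
  · gcongr
    have hε' : (0 : EReal) ≤ ε := EReal.coe_nonneg.2 hε
    calc ((-(ε * b) : ℝ) : EReal) = (ε : EReal) * -(b : EReal) := by
          rw [EReal.coe_neg, EReal.coe_mul, mul_neg]
      _ ≤ ε * -(Hneg γ : EReal) :=
          mul_le_mul_of_nonneg_left (EReal.neg_le_neg_iff.2 (hb γ hγ)) hε'
      _ ≤ ε * entE γ := mul_le_mul_of_nonneg_left (neg_Hneg_le_entE γ) hε'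
  · exact le_top

theorem lintegral_ofReal_le_liminf_of_tendsto {Ω : Type*} [MeasurableSpace Ω]
    [TopologicalSpace Ω] [OpensMeasurableSpace Ω] [HasOuterApproxClosed Ω]
    {ρ : ProbabilityMeasure Ω} {ρs : ℕ → ProbabilityMeasure Ω} (hρ : Tendsto ρs atTop (𝓝 ρ))
    {f : Ω → ℝ} (hf : Continuous f) (hf0 : 0 ≤ f) :
    ∫⁻ x, ENNReal.ofReal (f x) ∂(ρ : Measure Ω) ≤
      atTop.liminf (fun k => ∫⁻ x, ENNReal.ofReal (f x) ∂(ρs k : Measure Ω)) :=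
  lintegral_le_liminf_lintegral_of_forall_isOpen_measure_le_liminf_measure hf hf0
    fun _ hG => ProbabilityMeasure.le_liminf_measure_open_of_tendsto hρ hG

theorem tCost_eq_lintegral_ofReal {n : ℕ} (γ : Measure (En n × En n)) :
    tCost γ = ∫⁻ p, ENNReal.ofReal (‖p.1 - p.2‖ ^ 2) ∂γ := by
  simp_rw [tCost, ofReal_norm_sq]

theorem tCost_le_liminf_of_tendsto {n : ℕ} {γ : ProbabilityMeasure (En n × En n)}
    {γs : ℕ → ProbabilityMeasure (En n × En n)} (hγ : Tendsto γs atTop (𝓝 γ)) :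
    tCost (γ : Measure (En n × En n)) ≤
      atTop.liminf (fun k => tCost (γs k : Measure (En n × En n))) := by
  simp_rw [tCost_eq_lintegral_ofReal]
  exact lintegral_ofReal_le_liminf_of_tendsto hγ (by fun_prop) fun _ => sq_nonneg _

theorem isClosed_setOf_map_eq {Ω Ω' : Type*} [MeasurableSpace Ω] [TopologicalSpace Ω]
    [OpensMeasurableSpace Ω] [MeasurableSpace Ω'] [TopologicalSpace Ω'] [BorelSpace Ω']
    [HasOuterApproxClosed Ω'] {f : Ω → Ω'} (hf : Continuous f) (ρ : Measure Ω')
    [IsProbabilityMeasure ρ] :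
    IsClosed {γ : ProbabilityMeasure Ω | (γ : Measure Ω).map f = ρ} := by
  let ρ' : ProbabilityMeasure Ω' := ⟨ρ, inferInstance⟩
  convert (isClosed_singleton (x := ρ')).preimage (ProbabilityMeasure.continuous_map hf)
  ext γ
  simp only [Set.mem_preimage, Set.mem_singleton_iff,
    ← ProbabilityMeasure.toMeasure_injective.eq_iff, ProbabilityMeasure.toMeasure_map]
  rfl

theorem isClosed_setOf_isCoupling {n : ℕ} (μ ν : Measure (En n))
    [IsProbabilityMeasure μ] [IsProbabilityMeasure ν] :
    IsClosed {γ : ProbabilityMeasure (En n × En n) | IsCoupling μ ν γ} :=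
  (isClosed_setOf_map_eq continuous_fst μ).inter (isClosed_setOf_map_eq continuous_snd ν)

theorem stmt_12_general {n : ℕ} (μ ν : Measure (En n))
    [IsProbabilityMeasure μ] [IsProbabilityMeasure ν]
    (hμM : M2 μ ≠ ∞) (hνM : M2 ν ≠ ∞)
    (ε : ℕ → ℝ) (hε0 : ∀ k, 0 ≤ ε k) (hε : Tendsto ε atTop (𝓝 (0:ℝ)))
    (γ : Measure (En n × En n)) [IsProbabilityMeasure γ]
    (γs : ℕ → Measure (En n × En n)) (hγsP : ∀ k, IsProbabilityMeasure (γs k))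
    (hconv : ∀ f : BoundedContinuousFunction (En n × En n) ℝ,
      Tendsto (fun k => ∫ p, f p ∂(γs k)) atTop (𝓝 (∫ p, f p ∂γ))) :
    gammaF μ ν γ ≤ Filter.liminf (fun k => gammaFk μ ν (ε k) (γs k)) atTop := by
  let P : ℕ → ProbabilityMeasure (En n × En n) := fun k => ⟨γs k, hγsP k⟩
  let P₀ : ProbabilityMeasure (En n × En n) := ⟨γ, inferInstance⟩
  have hnarrow : Tendsto P atTop (𝓝 P₀) :=
    ProbabilityMeasure.tendsto_iff_forall_integral_tendsto.2 hconv
  by_cases hγ : IsCoupling μ ν γ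
  · obtain ⟨b, hb⟩ := exists_Hneg_le_of_isCoupling hμM hνM
    have hcost : (tCost γ : EReal) ≤ atTop.liminf (fun k => (tCost (γs k) : EReal)) := by
      have h := EReal.coe_ennreal_le_coe_ennreal_iff.2 (tCost_le_liminf_of_tendsto hnarrow)
      rwa [Monotone.map_liminf_of_continuousAt (fun _ _ => EReal.coe_ennreal_le_coe_ennreal_iff.2)
        _ continuous_coe_ennreal_ereal.continuousAt] at h
    have hpenalty : Tendsto (fun k => ((-(ε k * b) : ℝ) : EReal)) atTop (𝓝 0) := by
      simpa using EReal.tendsto_coe.2 ((hε.mul_const b).neg)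
    rw [gammaF, if_pos hγ]
    calc (tCost γ : EReal)
        = tCost γ + atTop.liminf (fun k => ((-(ε k * b) : ℝ) : EReal)) := by
          rw [hpenalty.liminf_eq, add_zero]
      _ ≤ atTop.liminf (fun k => (tCost (γs k) : EReal)) +
            atTop.liminf (fun k => ((-(ε k * b) : ℝ) : EReal)) := by gcongr
      _ ≤ atTop.liminf (fun k => (tCost (γs k) : EReal) + ((-(ε k * b) : ℝ) : EReal)) :=
          EReal.le_liminf_add
      _ ≤ _ := liminf_le_liminf (.of_forall fun k => coe_tCost_sub_le_gammaFk (hε0 k) hb _)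
  · have hoff : ∀ᶠ k in atTop, ¬IsCoupling μ ν (γs k) :=
      hnarrow ((isClosed_setOf_isCoupling μ ν).isOpen_compl.mem_nhds hγ)
    refine le_top.trans (le_liminf_of_le (by isBoundedDefault) (hoff.mono fun k hk => ?_))
    simp [gammaFk, hk]

/-- Γ-liminf: for `ε_k → 0⁺` and any sequence `γ_k → γ` narrowly,
`F(γ) ≤ liminf_k F_k(γ_k)`. -/
theorem stmt_12 {n : ℕ} (μ ν : Measure (En n))
    [IsProbabilityMeasure μ] [IsProbabilityMeasure ν]
    (hμac : μ ≪ (volume : Measure (En n))) (hνac : ν ≪ (volume : Measure (En n)))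
    (hμM : M2 μ ≠ ∞) (hνM : M2 ν ≠ ∞) (hμH : entE μ ≠ ⊤) (hνH : entE ν ≠ ⊤)
    (ε : ℕ → ℝ) (hε0 : ∀ k, 0 ≤ ε k) (hε : Tendsto ε atTop (𝓝 (0:ℝ)))
    (γ : Measure (En n × En n)) [IsProbabilityMeasure γ]
    (γs : ℕ → Measure (En n × En n)) (hγsP : ∀ k, IsProbabilityMeasure (γs k))
    (hconv : ∀ f : BoundedContinuousFunction (En n × En n) ℝ,
      Tendsto (fun k => ∫ p, f p ∂(γs k)) atTop (𝓝 (∫ p, f p ∂γ))) :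
    gammaF μ ν γ ≤ Filter.liminf (fun k => gammaFk μ ν (ε k) (γs k)) atTop :=
  stmt_12_general μ ν hμM hνM ε hε0 hε γ γs hγsP hconv
end
end
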